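/- Let Λ be a finitely aligned k-graph and fix a pair (μ, ν) ∈ Λ × Λ such that μ ≠ ν, s(μ) = s(ν) and r(μ) = r(ν). Then the following are equivalent: (1) (μ, ν) is a generalised cycle; (2) the set Ext(μ; {ν}) is an exhaustive subset of s(μ)Λ; (3) {μx : x ∈ s(μ)∂Λ} ⊆ {νy : y ∈ s(ν)∂Λ}. -/

import Mathlib

open scoped ComplexOrder ENat

/-- A higher-rank graph (`k`-graph): a countable small category `Λ` together with a degree
functor `d : Λ → ℕᵏ` satisfying the unique factorisation property.  Morphisms ("paths") form
the type `Path`; vertices are identified with the paths of degree `0`.  Composition is encoded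
as a total function `comp` whose axioms only apply to composable pairs (`s μ = r ν`). -/
structure KGraph (k : ℕ) : Type 1 where
  Path : Type
  countable : Countable Path
  d : Path → Fin k → ℕ
  r : Path → Path
  s : Path → Path
  comp : Path → Path → Path
  d_r : ∀ lam, d (r lam) = 0
  d_s : ∀ lam, d (s lam) = 0
  r_vertex : ∀ v, d v = 0 → r v = v
  s_vertex : ∀ v, d v = 0 → s v = v
  r_comp : ∀ mu nu, s mu = r nu → r (comp mu nu) = r mu
  s_comp : ∀ mu nu, s mu = r nu → s (comp mu nu) = s nu
  d_comp : ∀ mu nu, s mu = r nu → d (comp mu nu) = d mu + d nu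
  comp_assoc : ∀ lam mu nu, s lam = r mu → s mu = r nu →
    comp (comp lam mu) nu = comp lam (comp mu nu)
  id_comp : ∀ lam, comp (r lam) lam = lam
  comp_id : ∀ lam, comp lam (s lam) = lam
  factor : ∀ (lam : Path) (m n : Fin k → ℕ), d lam = m + n →
    ∃! p : Path × Path, d p.1 = m ∧ d p.2 = n ∧ s p.1 = r p.2 ∧ comp p.1 p.2 = lam

namespace KGraph

variable {k : ℕ} (Λ : KGraph k)

/-- `v` is a vertex, i.e. a path of degree `0`. -/
def IsVertex (v : Λ.Path) : Prop := Λ.d v = 0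

/-- The set of minimal common extensions of `mu` and `nu`. -/
def MCE (mu nu : Λ.Path) : Set Λ.Path :=
  {lam | Λ.d lam = Λ.d mu ⊔ Λ.d nu ∧
    (∃ α, Λ.s mu = Λ.r α ∧ Λ.comp mu α = lam) ∧
    (∃ β, Λ.s nu = Λ.r β ∧ Λ.comp nu β = lam)}

/-- Pairs `(α, β)` with `μα = νβ ∈ MCE (μ, ν)`. -/
def MCEPairs (mu nu : Λ.Path) : Set (Λ.Path × Λ.Path) :=
  {p | Λ.s mu = Λ.r p.1 ∧ Λ.s nu = Λ.r p.2 ∧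
    Λ.comp mu p.1 = Λ.comp nu p.2 ∧ Λ.comp mu p.1 ∈ Λ.MCE mu nu}

/-- `Λ` is finitely aligned if all sets of minimal common extensions are finite. -/
def FinitelyAligned : Prop := ∀ mu nu : Λ.Path, (Λ.MCE mu nu).Finite

/-- `Λ` is row-finite if `vΛⁿ` is finite for every vertex `v` and `n ∈ ℕᵏ`. -/
def RowFinite : Prop :=
  ∀ (v : Λ.Path) (n : Fin k → ℕ), Λ.IsVertex v → {lam | Λ.r lam = v ∧ Λ.d lam = n}.Finite

/-- `Λ` is locally convex. -/
def LocallyConvex : Prop :=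
  ∀ i j : Fin k, i ≠ j → ∀ mu : Λ.Path, Λ.d mu = Pi.single i 1 →
    (∃ e, Λ.r e = Λ.r mu ∧ Λ.d e = Pi.single j 1) →
    ∃ e, Λ.r e = Λ.s mu ∧ Λ.d e = Pi.single j 1

/-- A subset `F ⊆ vΛ` is exhaustive if every `λ ∈ vΛ` has a common extension with some
member of `F`. -/
def Exhaustive (v : Λ.Path) (F : Set Λ.Path) : Prop :=
  ∀ lam, Λ.r lam = v → ∃ mu ∈ F, (Λ.MCE lam mu).Nonempty

/-- A generalised cycle: a pair of distinct paths `μ ≠ ν` with the same range and source such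
that every extension of `μ` has a common extension with `ν`. -/
def IsGenCycle (mu nu : Λ.Path) : Prop :=
  mu ≠ nu ∧ Λ.s mu = Λ.s nu ∧ Λ.r mu = Λ.r nu ∧
    ∀ τ, Λ.r τ = Λ.s mu → (Λ.MCE (Λ.comp mu τ) nu).Nonempty

/-- An entrance to the generalised cycle `(μ, ν)`. -/
def IsEntrance (mu nu τ : Λ.Path) : Prop :=
  Λ.r τ = Λ.s nu ∧ Λ.MCE (Λ.comp nu τ) mu = ∅

/-- A (conventional) cycle: a path of nonzero degree whose range and source coincide. -/
def IsCycle (lam : Λ.Path) : Prop := Λ.d lam ≠ 0 ∧ Λ.r lam = Λ.s lam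

/-- `Λ` contains no (conventional) cycles. -/
def NoCycles : Prop := ∀ lam : Λ.Path, Λ.r lam = Λ.s lam → Λ.d lam = 0

/-- A vertex `v` with `vΛ = {v}`. -/
def IsSource (v : Λ.Path) : Prop :=
  Λ.IsVertex v ∧ ∀ lam, Λ.r lam = v → lam = v

/-- `Ext (μ; E)`. -/
def Ext (mu : Λ.Path) (E : Set Λ.Path) : Set Λ.Path :=
  {τ | Λ.r τ = Λ.s mu ∧ ∃ nu ∈ E, Λ.comp mu τ ∈ Λ.MCE mu nu}

/-- No cycle in `Λ` has an entrance. -/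
def NoCycleHasEntrance : Prop :=
  ∀ lam, Λ.IsCycle lam → ∀ τ, Λ.r τ = Λ.r lam → (Λ.MCE τ lam).Nonempty

/-- `x` encodes a path of degree `m ∈ (ℕ ∪ {∞})ᵏ` in `Λ`, i.e. a degree-preserving functor
`Ω_{k,m} → Λ`, recorded as a total function on pairs `(p, q)`; only the values with
`p ≤ q ≤ m` are constrained. -/
def IsPathFun (m : Fin k → ℕ∞) (x : (Fin k → ℕ) → (Fin k → ℕ) → Λ.Path) : Prop :=
  (∀ p q : Fin k → ℕ, p ≤ q → (∀ i, (q i : ℕ∞) ≤ m i) → Λ.d (x p q) = q - p) ∧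
  (∀ p q : Fin k → ℕ, p ≤ q → (∀ i, (q i : ℕ∞) ≤ m i) →
    Λ.r (x p q) = x p p ∧ Λ.s (x p q) = x q q) ∧
  (∀ p q u : Fin k → ℕ, p ≤ q → q ≤ u → (∀ i, (u i : ℕ∞) ≤ m i) →
    Λ.comp (x p q) (x q u) = x p u)

/-- `x` is a boundary path of degree `m`. -/
def IsBoundaryFun (m : Fin k → ℕ∞) (x : (Fin k → ℕ) → (Fin k → ℕ) → Λ.Path) : Prop :=
  Λ.IsPathFun m x ∧
  ∀ p : Fin k → ℕ, (∀ i, (p i : ℕ∞) ≤ m i) →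
    ∀ E : Set Λ.Path, E.Finite → (∀ lam ∈ E, Λ.r lam = x p p) → Λ.Exhaustive (x p p) E →
      ∃ mu ∈ E, (∀ i, ((p i + Λ.d mu i : ℕ) : ℕ∞) ≤ m i) ∧ x p (p + Λ.d mu) = mu

/-- A path function `x` of degree `m` belongs to `Λ^{≤∞}`. -/
def IsLeInftyPath (m : Fin k → ℕ∞) (x : (Fin k → ℕ) → (Fin k → ℕ) → Λ.Path) : Prop :=
  Λ.IsPathFun m x ∧
  ∀ n : Fin k → ℕ, (∀ i, (n i : ℕ∞) ≤ m i) → ∀ i, (n i : ℕ∞) = m i →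
    ∀ e, ¬(Λ.r e = x n n ∧ Λ.d e = Pi.single i 1)

/-- The degree of `τ^∞` for a cycle (or initial cycle) `τ`: `∞` in the coordinates where
`d τ` is nonzero, `0` elsewhere. -/
def degInf (τ : Λ.Path) : Fin k → ℕ∞ := fun i => if Λ.d τ i = 0 then 0 else ⊤

/-- An initial cycle: `r μ = s μ` and `r(μ)Λ^{eᵢ} = ∅` whenever `d(μ)ᵢ = 0`. -/
def IsInitialCycle (mu : Λ.Path) : Prop :=
  Λ.r mu = Λ.s mu ∧
  ∀ i, Λ.d mu i = 0 → ∀ e, ¬(Λ.r e = Λ.r mu ∧ Λ.d e = Pi.single i 1)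

/-- `x` is (the path function of) `μ^∞` for the initial cycle `μ`. -/
def IsInfIterate (mu : Λ.Path) (x : (Fin k → ℕ) → (Fin k → ℕ) → Λ.Path) : Prop :=
  Λ.IsPathFun (Λ.degInf mu) x ∧ x 0 0 = Λ.r mu ∧
    ∀ n : ℕ, x (n • Λ.d mu) ((n + 1) • Λ.d mu) = mu

/-- Membership in `Λ^{≤ n}`. -/
def LePath (n : Fin k → ℕ) (lam : Λ.Path) : Prop :=
  Λ.d lam ≤ n ∧
    ∀ i, Λ.d lam i < n i → ∀ e, ¬(Λ.r e = Λ.s lam ∧ Λ.d e = Pi.single i 1)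

/-- Minimal common extensions computed inside a subset `S` of `Λ` (all data lying in `S`). -/
def MCEWithin (S : Set Λ.Path) (mu nu : Λ.Path) : Set Λ.Path :=
  {lam | lam ∈ S ∧ Λ.d lam = Λ.d mu ⊔ Λ.d nu ∧
    (∃ α ∈ S, Λ.s mu = Λ.r α ∧ Λ.comp mu α = lam) ∧
    (∃ β ∈ S, Λ.s nu = Λ.r β ∧ Λ.comp nu β = lam)}

/-- Generalised cycles of the sub-`k`-graph determined by a subset `S` of `Λ`. -/
def IsGenCycleWithin (S : Set Λ.Path) (mu nu : Λ.Path) : Prop :=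
  mu ≠ nu ∧ Λ.s mu = Λ.s nu ∧ Λ.r mu = Λ.r nu ∧
    ∀ τ ∈ S, Λ.r τ = Λ.s mu → (Λ.MCEWithin S (Λ.comp mu τ) nu).Nonempty

end KGraph

/-- A Cuntz–Krieger `Λ`-family in a `*`-ring `B`: (CK1) the vertex elements are mutually
orthogonal projections, (CK2) multiplicativity, (CK3) the Cuntz–Krieger relation for
`t_μ* t_ν`, and (CK4) the exhaustivity relation (stated for an arbitrary ordering of the
finite exhaustive set). -/
structure CKFamily {k : ℕ} (Λ : KGraph k) (B : Type*) [NonUnitalRing B] [StarRing B] where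
  t : Λ.Path → B
  selfadjoint : ∀ v, Λ.IsVertex v → star (t v) = t v
  idem : ∀ v, Λ.IsVertex v → t v * t v = t v
  orth : ∀ v w, Λ.IsVertex v → Λ.IsVertex w → v ≠ w → t v * t w = 0
  mul_eq : ∀ mu nu, Λ.s mu = Λ.r nu → t mu * t nu = t (Λ.comp mu nu)
  ck3 : ∀ mu nu, star (t mu) * t nu = ∑ᶠ p ∈ Λ.MCEPairs mu nu, t p.1 * star (t p.2)
  ck4 : ∀ v, Λ.IsVertex v → ∀ (a : Λ.Path) (l : List Λ.Path), (a :: l).Nodup →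
    (∀ lam ∈ a :: l, Λ.r lam = v) → Λ.Exhaustive v {lam | lam ∈ a :: l} →
    (l.map fun lam => t v - t lam * star (t lam)).foldl (· * ·)
      (t v - t a * star (t a)) = 0

/-- A C*-algebra is AF (approximately finite-dimensional) if it contains an increasing
sequence of finite-dimensional `*`-subalgebras whose union is dense. -/
def IsAF (A : Type*) [NonUnitalNormedRing A] [StarRing A] [NormedSpace ℂ A] : Prop :=
  ∃ S : ℕ → NonUnitalStarSubalgebra ℂ A, Monotone S ∧
    (∀ n, FiniteDimensional ℂ (S n)) ∧ Dense (⋃ n, (S n : Set A))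

/-- A closed `*`-subalgebra of `A`, presented as a subset `S`, is AF if it contains an
increasing sequence of finite-dimensional `*`-subalgebras of `A` whose union is dense in `S`. -/
def IsAFIn (A : Type*) [NonUnitalNormedRing A] [StarRing A] [NormedSpace ℂ A]
    (S : Set A) : Prop :=
  ∃ T : ℕ → NonUnitalStarSubalgebra ℂ A, Monotone T ∧ (∀ n, (T n : Set A) ⊆ S) ∧
    (∀ n, FiniteDimensional ℂ (T n)) ∧ ∀ x ∈ S, x ∈ closure (⋃ n, (T n : Set A))

/-!
(1) ⇔ (2) is a matter of cancelling `μ` on the left: `μτ` and `ν` have a common extension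
exactly when some extension of `τ` lies in `Ext(μ; {ν})`.

For (1) ⇒ (3), `μx` is again a boundary path, since by finite alignment the boundary
condition can be pulled back along any finite segment (through `Ext`). Applying it at
`d(μ)` to the finite exhaustive set `Ext(μ; {ν})` shows that `ν` is an initial segment of
`μx`.

For (3) ⇒ (1), every path `μτ` extends to a boundary path: the limit of a chain of
extensions that serves each finite request `(P, F)` at arbitrarily late stages. By (3) this
boundary path also starts with `ν`, so `μτ` and `ν` have a common extension.
-/

namespace KGraph

variable {k : ℕ} {Λ : KGraph k}

section Factorisation

open Classical in
variable (Λ) in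
/-- The factorisation `ρ = ρ(0, a) ρ(a, d ρ)`; junk `(ρ, ρ)` unless `a ≤ d ρ`. -/
noncomputable def factorAt (ρ : Λ.Path) (a : Fin k → ℕ) : Λ.Path × Λ.Path :=
  if h : a ≤ Λ.d ρ then
    (Λ.factor ρ a (Λ.d ρ - a) (add_tsub_cancel_of_le h).symm).exists.choose
  else (ρ, ρ)

variable (Λ) in
noncomputable def pre (ρ : Λ.Path) (a : Fin k → ℕ) : Λ.Path := (Λ.factorAt ρ a).1

variable (Λ) in
noncomputable def suf (ρ : Λ.Path) (a : Fin k → ℕ) : Λ.Path := (Λ.factorAt ρ a).2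

variable {ρ σ τ ξ : Λ.Path} {a : Fin k → ℕ}

theorem factorAt_spec (h : a ≤ Λ.d ρ) :
    Λ.d (Λ.pre ρ a) = a ∧ Λ.d (Λ.suf ρ a) = Λ.d ρ - a ∧
      Λ.s (Λ.pre ρ a) = Λ.r (Λ.suf ρ a) ∧ Λ.comp (Λ.pre ρ a) (Λ.suf ρ a) = ρ := by
  have := (Λ.factor ρ a (Λ.d ρ - a) (add_tsub_cancel_of_le h).symm).exists.choose_spec
  simpa only [pre, suf, factorAt, dif_pos h] using this

theorem d_pre (h : a ≤ Λ.d ρ) : Λ.d (Λ.pre ρ a) = a := (factorAt_spec h).1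

theorem d_suf (h : a ≤ Λ.d ρ) : Λ.d (Λ.suf ρ a) = Λ.d ρ - a := (factorAt_spec h).2.1

theorem s_pre (h : a ≤ Λ.d ρ) : Λ.s (Λ.pre ρ a) = Λ.r (Λ.suf ρ a) := (factorAt_spec h).2.2.1

theorem comp_pre_suf (h : a ≤ Λ.d ρ) : Λ.comp (Λ.pre ρ a) (Λ.suf ρ a) = ρ :=
  (factorAt_spec h).2.2.2

theorem s_suf (h : a ≤ Λ.d ρ) : Λ.s (Λ.suf ρ a) = Λ.s ρ := by
  conv_rhs => rw [← comp_pre_suf h]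
  rw [Λ.s_comp _ _ (s_pre h)]

theorem pre_comp_and_suf_comp (h : Λ.s σ = Λ.r τ) :
    Λ.pre (Λ.comp σ τ) (Λ.d σ) = σ ∧ Λ.suf (Λ.comp σ τ) (Λ.d σ) = τ := by
  have hd := Λ.d_comp σ τ h
  have hle : Λ.d σ ≤ Λ.d (Λ.comp σ τ) := hd ▸ le_self_add
  obtain ⟨h1, h2, h3, h4⟩ := factorAt_spec hle
  have := (Λ.factor _ _ _ (add_tsub_cancel_of_le hle).symm).unique ⟨h1, h2, h3, h4⟩
    (y₂ := (σ, τ)) ⟨rfl, by rw [hd, add_tsub_cancel_left], h, rfl⟩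
  exact Prod.ext_iff.1 this

theorem pre_comp (h : Λ.s σ = Λ.r τ) : Λ.pre (Λ.comp σ τ) (Λ.d σ) = σ :=
  (pre_comp_and_suf_comp h).1

theorem suf_comp (h : Λ.s σ = Λ.r τ) : Λ.suf (Λ.comp σ τ) (Λ.d σ) = τ :=
  (pre_comp_and_suf_comp h).2

theorem comp_left_cancel {τ₁ τ₂ : Λ.Path} (h₁ : Λ.s σ = Λ.r τ₁) (h₂ : Λ.s σ = Λ.r τ₂)
    (h : Λ.comp σ τ₁ = Λ.comp σ τ₂) : τ₁ = τ₂ := by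
  rw [← suf_comp h₁, h, suf_comp h₂]

theorem s_r (ρ : Λ.Path) : Λ.s (Λ.r ρ) = Λ.r ρ := Λ.s_vertex _ (Λ.d_r ρ)

theorem r_s (ρ : Λ.Path) : Λ.r (Λ.s ρ) = Λ.s ρ := Λ.r_vertex _ (Λ.d_s ρ)

theorem suf_zero (ρ : Λ.Path) : Λ.suf ρ 0 = ρ := by
  simpa only [Λ.d_r, Λ.id_comp] using suf_comp (s_r ρ)

theorem pre_d (ρ : Λ.Path) : Λ.pre ρ (Λ.d ρ) = ρ := by
  simpa only [Λ.comp_id] using pre_comp (r_s ρ).symm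

theorem suf_d (ρ : Λ.Path) : Λ.suf ρ (Λ.d ρ) = Λ.s ρ := by
  simpa only [Λ.comp_id] using suf_comp (r_s ρ).symm

end Factorisation

section Prefix

variable (Λ) in
/-- `σ` is an initial segment of `ξ`, i.e. `ξ ∈ σΛ`. -/
def IsPrefix (σ ξ : Λ.Path) : Prop := ∃ α, Λ.s σ = Λ.r α ∧ Λ.comp σ α = ξ

variable {ρ σ τ ξ γ : Λ.Path} {a : Fin k → ℕ}

theorem isPrefix_comp (h : Λ.s σ = Λ.r τ) : Λ.IsPrefix σ (Λ.comp σ τ) := ⟨τ, h, rfl⟩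

theorem isPrefix_refl (ρ : Λ.Path) : Λ.IsPrefix ρ ρ := ⟨Λ.s ρ, (r_s ρ).symm, Λ.comp_id ρ⟩

theorem isPrefix_pre (h : a ≤ Λ.d ρ) : Λ.IsPrefix (Λ.pre ρ a) ρ :=
  ⟨Λ.suf ρ a, s_pre h, comp_pre_suf h⟩

theorem isPrefix_iff : Λ.IsPrefix σ ξ ↔ Λ.d σ ≤ Λ.d ξ ∧ Λ.pre ξ (Λ.d σ) = σ := by
  constructor
  · rintro ⟨α, h, rfl⟩
    exact ⟨Λ.d_comp σ α h ▸ le_self_add, pre_comp h⟩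
  · rintro ⟨hle, hpre⟩
    exact hpre ▸ isPrefix_pre hle

theorem IsPrefix.d_le (h : Λ.IsPrefix σ ξ) : Λ.d σ ≤ Λ.d ξ := (isPrefix_iff.1 h).1

theorem IsPrefix.eq_of_d_eq {σ' : Λ.Path} (h : Λ.IsPrefix σ ξ) (h' : Λ.IsPrefix σ' ξ)
    (hd : Λ.d σ = Λ.d σ') : σ = σ' := by
  rw [← (isPrefix_iff.1 h).2, ← (isPrefix_iff.1 h').2, hd]

theorem IsPrefix.trans (h₁ : Λ.IsPrefix σ τ) (h₂ : Λ.IsPrefix τ ξ) : Λ.IsPrefix σ ξ := by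
  obtain ⟨α, hα, rfl⟩ := h₁
  obtain ⟨β, hβ, rfl⟩ := h₂
  have hαβ : Λ.s α = Λ.r β := by rwa [Λ.s_comp σ α hα] at hβ
  exact ⟨Λ.comp α β, by rwa [Λ.r_comp α β hαβ], (Λ.comp_assoc σ α β hα hαβ).symm⟩

theorem IsPrefix.comp_left (hγ : Λ.s γ = Λ.r σ) (h : Λ.IsPrefix σ ξ) :
    Λ.IsPrefix (Λ.comp γ σ) (Λ.comp γ ξ) := by
  obtain ⟨α, hα, rfl⟩ := h
  exact ⟨α, by rwa [Λ.s_comp γ σ hγ], Λ.comp_assoc γ σ α hγ hα⟩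

theorem IsPrefix.of_comp_left (hσ : Λ.s γ = Λ.r σ) (hξ : Λ.s γ = Λ.r ξ)
    (h : Λ.IsPrefix (Λ.comp γ σ) (Λ.comp γ ξ)) : Λ.IsPrefix σ ξ := by
  obtain ⟨α, hα, e⟩ := h
  have hσα : Λ.s σ = Λ.r α := by rwa [Λ.s_comp γ σ hσ] at hα
  refine ⟨α, hσα, comp_left_cancel (by rwa [Λ.r_comp σ α hσα]) hξ ?_⟩
  rw [← Λ.comp_assoc γ σ α hσ hσα, e]

theorem IsPrefix.of_le (hσ : Λ.IsPrefix σ ξ) (hτ : Λ.IsPrefix τ ξ) (hd : Λ.d σ ≤ Λ.d τ) :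
    Λ.IsPrefix σ τ := by
  have hpre : Λ.IsPrefix (Λ.pre τ (Λ.d σ)) τ := isPrefix_pre hd
  rw [← hσ.eq_of_d_eq (hpre.trans hτ) (d_pre hd).symm] at hpre
  exact hpre

theorem IsPrefix.pre_eq_pre (h : Λ.IsPrefix ρ ξ) (ha : a ≤ Λ.d ρ) :
    Λ.pre ξ a = Λ.pre ρ a :=
  (isPrefix_pre (ha.trans h.d_le)).eq_of_d_eq ((isPrefix_pre ha).trans h)
    (by rw [d_pre ha, d_pre (ha.trans h.d_le)])

theorem suf_comp_of_le (h : Λ.s ρ = Λ.r τ) (ha : a ≤ Λ.d ρ) :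
    Λ.suf (Λ.comp ρ τ) a = Λ.comp (Λ.suf ρ a) τ := by
  have hsτ : Λ.s (Λ.suf ρ a) = Λ.r τ := by
    rw [← h, ← Λ.s_comp _ _ (s_pre ha), comp_pre_suf ha]
  have e : Λ.comp ρ τ = Λ.comp (Λ.pre ρ a) (Λ.comp (Λ.suf ρ a) τ) := by
    rw [← Λ.comp_assoc _ _ _ (s_pre ha) hsτ, comp_pre_suf ha]
  have := suf_comp (σ := Λ.pre ρ a) (τ := Λ.comp (Λ.suf ρ a) τ)
    (by rw [Λ.r_comp _ _ hsτ, s_pre ha])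
  rwa [d_pre ha, ← e] at this

theorem mem_MCE_iff :
    ρ ∈ Λ.MCE σ τ ↔ Λ.d ρ = Λ.d σ ⊔ Λ.d τ ∧ Λ.IsPrefix σ ρ ∧ Λ.IsPrefix τ ρ := Iff.rfl

theorem pre_mem_MCE (hσ : Λ.IsPrefix σ ξ) (hτ : Λ.IsPrefix τ ξ) :
    Λ.pre ξ (Λ.d σ ⊔ Λ.d τ) ∈ Λ.MCE σ τ := by
  have hle : Λ.d σ ⊔ Λ.d τ ≤ Λ.d ξ := sup_le hσ.d_le hτ.d_le
  have hη := isPrefix_pre hle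
  exact ⟨d_pre hle, hσ.of_le hη (by rw [d_pre hle]; exact le_sup_left),
    hτ.of_le hη (by rw [d_pre hle]; exact le_sup_right)⟩

theorem MCE_nonempty_of_isPrefix (hσ : Λ.IsPrefix σ ξ) (hτ : Λ.IsPrefix τ ξ) :
    (Λ.MCE σ τ).Nonempty :=
  ⟨_, pre_mem_MCE hσ hτ⟩

end Prefix

section Ext

variable {μ ν γ : Λ.Path} {E : Set Λ.Path}

theorem exhaustive_ext_of_forall
    (hE : ∀ σ, Λ.r σ = Λ.s γ → ∃ μ ∈ E, (Λ.MCE (Λ.comp γ σ) μ).Nonempty) :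
    Λ.Exhaustive (Λ.s γ) (Λ.Ext γ E) := by
  intro σ hσ
  obtain ⟨μ, hμE, ξ, hξ⟩ := hE σ hσ
  obtain ⟨-, hγσξ, hμξ⟩ := mem_MCE_iff.1 hξ
  obtain ⟨ρ, hρ, rfl⟩ := (isPrefix_comp hσ.symm).trans hγσξ
  have hη := pre_mem_MCE (isPrefix_comp hρ) hμξ
  obtain ⟨τ, hτ, hγτ⟩ := (mem_MCE_iff.1 hη).2.1
  have hγτρ : Λ.IsPrefix (Λ.comp γ τ) (Λ.comp γ ρ) :=
    hγτ ▸ isPrefix_pre (sup_le (isPrefix_comp hρ).d_le hμξ.d_le)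
  exact ⟨τ, ⟨hτ.symm, μ, hμE, hγτ ▸ hη⟩,
    MCE_nonempty_of_isPrefix (IsPrefix.of_comp_left hσ.symm hρ hγσξ)
      (IsPrefix.of_comp_left hτ hρ hγτρ)⟩

theorem Exhaustive.ext (hE : Λ.Exhaustive (Λ.r γ) E) : Λ.Exhaustive (Λ.s γ) (Λ.Ext γ E) :=
  exhaustive_ext_of_forall fun _ hσ => hE _ (Λ.r_comp _ _ hσ.symm)

theorem ext_finite (hFA : Λ.FinitelyAligned) (γ : Λ.Path) (hE : E.Finite) :
    (Λ.Ext γ E).Finite := by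
  refine Set.Finite.of_finite_image (f := Λ.comp γ) ?_ fun τ₁ h₁ τ₂ h₂ h =>
    comp_left_cancel h₁.1.symm h₂.1.symm h
  refine (hE.biUnion fun μ _ => hFA γ μ).subset ?_
  rintro _ ⟨τ, ⟨-, μ, hμ, hmce⟩, rfl⟩
  exact Set.mem_biUnion hμ hmce

theorem IsGenCycle.exhaustive_ext (h : Λ.IsGenCycle μ ν) :
    Λ.Exhaustive (Λ.s μ) (Λ.Ext μ {ν}) :=
  exhaustive_ext_of_forall fun σ hσ => ⟨ν, rfl, h.2.2.2 σ hσ⟩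

theorem isGenCycle_of_exhaustive_ext (hne : μ ≠ ν) (hs : Λ.s μ = Λ.s ν) (hr : Λ.r μ = Λ.r ν)
    (hex : Λ.Exhaustive (Λ.s μ) (Λ.Ext μ {ν})) : Λ.IsGenCycle μ ν := by
  refine ⟨hne, hs, hr, fun τ hτ => ?_⟩
  obtain ⟨τ', ⟨hτ', _, rfl, hmce⟩, ξ, hξ⟩ := hex τ hτ
  obtain ⟨-, hτξ, hτ'ξ⟩ := mem_MCE_iff.1 hξ
  exact MCE_nonempty_of_isPrefix (IsPrefix.comp_left hτ.symm hτξ)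
    ((mem_MCE_iff.1 hmce).2.2.trans (IsPrefix.comp_left hτ'.symm hτ'ξ))

end Ext

section PathFun

variable {M m : Fin k → ℕ∞} {z x : (Fin k → ℕ) → (Fin k → ℕ) → Λ.Path}
  {p q u b : Fin k → ℕ} {σ : Λ.Path}

theorem coe_le_of_le (h : p ≤ q) (hq : ∀ i, (q i : ℕ∞) ≤ M i) : ∀ i, (p i : ℕ∞) ≤ M i :=
  fun i => (Nat.cast_le.2 (h i)).trans (hq i)

theorem coe_add_le (hM : ∀ i, M i = b i + m i) (hq : ∀ i, (q i : ℕ∞) ≤ m i) :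
    ∀ i, ((b + q) i : ℕ∞) ≤ M i := fun i => by
  rw [hM, Pi.add_apply, Nat.cast_add]
  exact add_le_add_right (hq i) _

theorem IsPathFun.s_eq (hz : Λ.IsPathFun M z) (hpq : p ≤ q) (hq : ∀ i, (q i : ℕ∞) ≤ M i) :
    Λ.s (z p q) = z q q := (hz.2.1 p q hpq hq).2

theorem IsPathFun.isPrefix (hz : Λ.IsPathFun M z) (hpq : p ≤ q) (hqu : q ≤ u)
    (hu : ∀ i, (u i : ℕ∞) ≤ M i) : Λ.IsPrefix (z p q) (z p u) :=
  ⟨z q u, by rw [hz.s_eq hpq (coe_le_of_le hqu hu), (hz.2.1 q u hqu hu).1], hz.2.2 p q u hpq hqu hu⟩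

theorem IsPathFun.eq_of_isPrefix (hz : Λ.IsPathFun M z) (hpu : p ≤ u)
    (hu : ∀ i, (u i : ℕ∞) ≤ M i) (h : Λ.IsPrefix σ (z p u)) :
    p + Λ.d σ ≤ u ∧ z p (p + Λ.d σ) = σ := by
  have hle : p + Λ.d σ ≤ u := (le_tsub_iff_left hpu).1 (hz.1 p u hpu hu ▸ h.d_le)
  refine ⟨hle, (hz.isPrefix le_self_add hle hu).eq_of_d_eq h ?_⟩
  rw [hz.1 p _ le_self_add (coe_le_of_le hle hu), add_tsub_cancel_left]

theorem IsPathFun.MCE_nonempty (hz : Λ.IsPathFun M z) {τ : Λ.Path}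
    (hσ : z 0 (Λ.d σ) = σ) (hτ : z 0 (Λ.d τ) = τ)
    (hσM : ∀ i, (Λ.d σ i : ℕ∞) ≤ M i) (hτM : ∀ i, (Λ.d τ i : ℕ∞) ≤ M i) :
    (Λ.MCE σ τ).Nonempty := by
  have hM : ∀ i, ((Λ.d σ ⊔ Λ.d τ) i : ℕ∞) ≤ M i := fun i => by
    rw [Pi.sup_apply, Nat.mono_cast.map_max]; exact max_le (hσM i) (hτM i)
  have hσξ := hz.isPrefix zero_le le_sup_left hM
  have hτξ := hz.isPrefix zero_le le_sup_right hM
  rw [hσ] at hσξ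
  rw [hτ] at hτξ
  exact MCE_nonempty_of_isPrefix hσξ hτξ

theorem IsPathFun.translate (hz : Λ.IsPathFun M z) (hM : ∀ i, M i = b i + m i) :
    Λ.IsPathFun m (fun p q => z (b + p) (b + q)) := by
  refine ⟨fun p q hpq hq => ?_, fun p q hpq hq => ?_, fun p q u hpq hqu hu => ?_⟩
  · rw [hz.1 _ _ (add_le_add_right hpq b) (coe_add_le hM hq), add_tsub_add_eq_tsub_left]
  · exact hz.2.1 _ _ (add_le_add_right hpq b) (coe_add_le hM hq)
  · exact hz.2.2 _ _ _ (add_le_add_right hpq b) (add_le_add_right hqu b) (coe_add_le hM hu)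

variable (Λ) in
def BoundaryAt (M : Fin k → ℕ∞) (z : (Fin k → ℕ) → (Fin k → ℕ) → Λ.Path)
    (p : Fin k → ℕ) : Prop :=
  ∀ E : Set Λ.Path, E.Finite → (∀ lam ∈ E, Λ.r lam = z p p) → Λ.Exhaustive (z p p) E →
    ∃ mu ∈ E, (∀ i, ((p + Λ.d mu) i : ℕ∞) ≤ M i) ∧ z p (p + Λ.d mu) = mu

theorem boundaryAt_translate_iff (hM : ∀ i, M i = b i + m i)
    (hzx : ∀ p q, p ≤ q → (∀ i, (q i : ℕ∞) ≤ m i) → z (b + p) (b + q) = x p q)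
    (hp : ∀ i, (p i : ℕ∞) ≤ m i) : Λ.BoundaryAt M z (b + p) ↔ Λ.BoundaryAt m x p := by
  have hdeg : ∀ q, (∀ i, ((b + q) i : ℕ∞) ≤ M i) ↔ ∀ i, (q i : ℕ∞) ≤ m i := fun q =>
    forall_congr' fun i => by
      rw [hM, Pi.add_apply, Nat.cast_add, ENat.add_le_add_iff_left (ENat.natCast_ne_top _)]
  unfold BoundaryAt
  rw [hzx p p le_rfl hp]
  refine forall_congr' fun E => imp_congr_right fun _ => imp_congr_right fun _ =>
    imp_congr_right fun _ => exists_congr fun σ => and_congr_right fun _ => ?_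
  rw [add_assoc, hdeg]
  exact and_congr_right fun h => by rw [hzx _ _ le_self_add h]

end PathFun

section Boundary

variable {M m : Fin k → ℕ∞} {z x : (Fin k → ℕ) → (Fin k → ℕ) → Λ.Path} {b : Fin k → ℕ}

theorem IsBoundaryFun.shift (hz : Λ.IsBoundaryFun M z) (hb : ∀ i, (b i : ℕ∞) ≤ M i) :
    Λ.IsBoundaryFun (fun i => M i - b i) (fun p q => z (b + p) (b + q)) := by
  have hM : ∀ i, M i = b i + (M i - b i) := fun i => (add_tsub_cancel_of_le (hb i)).symm
  exact ⟨hz.1.translate hM, fun p hp =>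
    (boundaryAt_translate_iff hM (fun _ _ _ _ => rfl) hp).1 (hz.2 _ (coe_add_le hM hp))⟩

/-- A finite exhaustive set `E` at `z(P)` pulls back to the finite exhaustive set
`Ext(z(P, Q); E)` at `z(Q)`. -/
theorem IsPathFun.boundaryAt_of_le (hFA : Λ.FinitelyAligned) (hz : Λ.IsPathFun M z)
    {P Q : Fin k → ℕ} (hPQ : P ≤ Q) (hQ : ∀ i, (Q i : ℕ∞) ≤ M i)
    (hbQ : Λ.BoundaryAt M z Q) : Λ.BoundaryAt M z P := by
  intro E hEfin hEr hEex
  have hγr : Λ.r (z P Q) = z P P := (hz.2.1 P Q hPQ hQ).1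
  have hγs : Λ.s (z P Q) = z Q Q := hz.s_eq hPQ hQ
  obtain ⟨τ, ⟨hτ, μ, hμE, hmce⟩, hτM, hzτ⟩ := hbQ (Λ.Ext (z P Q) E)
    (ext_finite hFA _ hEfin) (fun _ h => h.1.trans hγs)
    (hγs ▸ Exhaustive.ext (hγr ▸ hEex))
  have hγτ : Λ.comp (z P Q) τ = z P (Q + Λ.d τ) := by
    have h := hz.2.2 _ _ _ hPQ le_self_add hτM
    rwa [hzτ] at h
  obtain ⟨hle, hzμ⟩ := hz.eq_of_isPrefix (hPQ.trans le_self_add) hτM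
    (hγτ ▸ (mem_MCE_iff.1 hmce).2.2)
  exact ⟨μ, hμE, coe_le_of_le hle hτM, hzμ⟩

/-- The paper's `λx ∈ ∂Λ` for `x ∈ s(λ)∂Λ`, with `a = d(λ)`. -/
theorem IsBoundaryFun.prepend (hFA : Λ.FinitelyAligned) {a : Fin k → ℕ}
    (hx : Λ.IsBoundaryFun m x) (hz : Λ.IsPathFun (fun i => (a i : ℕ∞) + m i) z)
    (hzx : ∀ p q, p ≤ q → (∀ i, (q i : ℕ∞) ≤ m i) → z (a + p) (a + q) = x p q) :
    Λ.IsBoundaryFun (fun i => (a i : ℕ∞) + m i) z := by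
  refine ⟨hz, fun P hP => ?_⟩
  have hp : ∀ i, (((P ⊔ a) - a) i : ℕ∞) ≤ m i := fun i => by
    rw [Pi.sub_apply, Pi.sup_apply, show max (P i) (a i) - a i = P i - a i by omega,
      ENat.natCast_sub, tsub_le_iff_left]
    exact hP i
  have hQ := (boundaryAt_translate_iff (fun _ => rfl) hzx hp).2 (hx.2 _ hp)
  rw [add_tsub_cancel_of_le le_sup_right] at hQ
  exact hz.boundaryAt_of_le hFA le_sup_left
    (add_tsub_cancel_of_le (le_sup_right : a ≤ P ⊔ a) ▸ coe_add_le (fun _ => rfl) hp) hQ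

theorem IsBoundaryFun.prefix_eq_of_isGenCycle (hFA : Λ.FinitelyAligned)
    (hz : Λ.IsBoundaryFun M z) {μ ν : Λ.Path} (hgc : Λ.IsGenCycle μ ν)
    (hμM : ∀ i, (Λ.d μ i : ℕ∞) ≤ M i) (hzμ : z 0 (Λ.d μ) = μ) :
    (∀ i, (Λ.d ν i : ℕ∞) ≤ M i) ∧ z 0 (Λ.d ν) = ν := by
  have hμs : z (Λ.d μ) (Λ.d μ) = Λ.s μ := by rw [← hz.1.s_eq zero_le hμM, hzμ]
  obtain ⟨τ, ⟨hτ, _, rfl, hmce⟩, hτM, hzτ⟩ := hz.2 _ hμM (Λ.Ext μ {ν})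
    (ext_finite hFA μ (Set.finite_singleton ν)) (fun _ h => h.1.trans hμs.symm)
    (hμs ▸ hgc.exhaustive_ext)
  have hμτ : Λ.comp μ τ = z 0 (Λ.d μ + Λ.d τ) := by
    have h := hz.1.2.2 _ _ _ zero_le le_self_add hτM
    rwa [hzμ, hzτ] at h
  obtain ⟨hle, hzν⟩ := hz.1.eq_of_isPrefix zero_le hτM (hμτ ▸ (mem_MCE_iff.1 hmce).2.2)
  rw [zero_add] at hle hzν
  exact ⟨coe_le_of_le hle hτM, hzν⟩

end Boundary

section Segments

variable {ρ ξ : Λ.Path} {a b p q : Fin k → ℕ}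

variable (Λ) in
/-- The paper's `ρ(p, q)`. -/
noncomputable def seg (ρ : Λ.Path) (p q : Fin k → ℕ) : Λ.Path := Λ.suf (Λ.pre ρ q) p

theorem pre_pre (hba : b ≤ a) (ha : a ≤ Λ.d ρ) : Λ.pre (Λ.pre ρ a) b = Λ.pre ρ b :=
  ((isPrefix_pre ha).pre_eq_pre (by rwa [d_pre ha])).symm

theorem IsPrefix.seg_eq (h : Λ.IsPrefix ρ ξ) (hq : q ≤ Λ.d ρ) : Λ.seg ξ p q = Λ.seg ρ p q := by
  rw [seg, seg, h.pre_eq_pre hq]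

theorem seg_self (h : p ≤ Λ.d ρ) : Λ.seg ρ p p = Λ.s (Λ.pre ρ p) := by
  have := suf_d (Λ.pre ρ p)
  rwa [d_pre h] at this

theorem seg_d (ρ : Λ.Path) (p : Fin k → ℕ) : Λ.seg ρ p (Λ.d ρ) = Λ.suf ρ p := by
  rw [seg, pre_d]

theorem seg_zero_d (ρ : Λ.Path) : Λ.seg ρ 0 (Λ.d ρ) = ρ := by
  rw [seg_d, suf_zero]

theorem isPathFun_seg (ρ : Λ.Path) : Λ.IsPathFun (fun i => (Λ.d ρ i : ℕ∞)) (Λ.seg ρ) := by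
  have hle : ∀ {q}, (∀ i, (q i : ℕ∞) ≤ Λ.d ρ i) → q ≤ Λ.d ρ := fun hq i => Nat.cast_le.1 (hq i)
  refine ⟨fun p q hpq hq => ?_, fun p q hpq hq => ?_, fun p q u hpq hqu hu => ?_⟩
  · rw [seg, d_suf (by rwa [d_pre (hle hq)]), d_pre (hle hq)]
  · have hp : p ≤ Λ.d (Λ.pre ρ q) := by rwa [d_pre (hle hq)]
    rw [seg, ← s_pre hp, s_suf hp, pre_pre hpq (hle hq), seg_self (hpq.trans (hle hq)),
      seg_self (hle hq)]
    exact ⟨rfl, rfl⟩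
  · have hq : q ≤ Λ.d (Λ.pre ρ u) := by rwa [d_pre (hle hu)]
    rw [seg, seg, seg, ← pre_pre hqu (hle hu), ← suf_comp_of_le (s_pre hq)
      (by rwa [d_pre hq]), comp_pre_suf hq]

end Segments

section Existence

open Classical in
variable (Λ) in
noncomputable def step (ρ : Λ.Path) (e : (Fin k → ℕ) × Finset Λ.Path) : Λ.Path :=
  if h : e.1 ≤ Λ.d ρ ∧ (Λ.Ext (Λ.suf ρ e.1) e.2).Nonempty then Λ.comp ρ h.2.some else ρ

theorem isPrefix_step (ρ : Λ.Path) (e : (Fin k → ℕ) × Finset Λ.Path) :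
    Λ.IsPrefix ρ (Λ.step ρ e) := by
  unfold step
  split_ifs with h
  · exact isPrefix_comp ((s_suf h.1).symm.trans h.2.some_mem.1.symm)
  · exact isPrefix_refl ρ

theorem exists_step_eq {ρ : Λ.Path} {P : Fin k → ℕ} {F : Finset Λ.Path}
    (h : P ≤ Λ.d ρ ∧ (Λ.Ext (Λ.suf ρ P) F).Nonempty) :
    ∃ τ ∈ Λ.Ext (Λ.suf ρ P) F, Λ.step ρ (P, F) = Λ.comp ρ τ :=
  ⟨h.2.some, h.2.some_mem, dif_pos h⟩

variable (Λ) in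
noncomputable def chain (start : Λ.Path) (sched : ℕ → (Fin k → ℕ) × Finset Λ.Path) :
    ℕ → Λ.Path
  | 0 => start
  | n + 1 => Λ.step (chain start sched n) (sched n)

variable {start : Λ.Path} {sched : ℕ → (Fin k → ℕ) × Finset Λ.Path}

theorem isPrefix_chain {n n' : ℕ} (h : n ≤ n') :
    Λ.IsPrefix (Λ.chain start sched n) (Λ.chain start sched n') := by
  induction n', h using Nat.le_induction with
  | base => exact isPrefix_refl _
  | succ n' _ ih => exact ih.trans (isPrefix_step _ _)

variable (Λ start sched) in
noncomputable def chainDeg : Fin k → ℕ∞ := fun i => ⨆ n, (Λ.d (Λ.chain start sched n) i : ℕ∞)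

open Classical in
variable (Λ start sched) in
noncomputable def chainFun (p q : Fin k → ℕ) : Λ.Path :=
  if h : ∃ n, q ≤ Λ.d (Λ.chain start sched n) then Λ.seg (Λ.chain start sched h.choose) p q
  else start

theorem chainFun_eq {p q : Fin k → ℕ} {n : ℕ} (hq : q ≤ Λ.d (Λ.chain start sched n)) :
    Λ.chainFun start sched p q = Λ.seg (Λ.chain start sched n) p q := by
  have hex : ∃ n, q ≤ Λ.d (Λ.chain start sched n) := ⟨n, hq⟩
  rw [chainFun, dif_pos hex]
  rcases le_total hex.choose n with h | h
  · exact ((isPrefix_chain h).seg_eq hex.choose_spec).symm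
  · exact (isPrefix_chain h).seg_eq hq

theorem le_chainDeg (n : ℕ) (i : Fin k) :
    (Λ.d (Λ.chain start sched n) i : ℕ∞) ≤ Λ.chainDeg start sched i :=
  le_iSup (fun n => (Λ.d (Λ.chain start sched n) i : ℕ∞)) n

theorem exists_le_of_natCast_le_iSup {g : ℕ → ℕ} {q : ℕ} (h : (q : ℕ∞) ≤ ⨆ n, (g n : ℕ∞)) :
    ∃ n, q ≤ g n := by
  rcases Nat.eq_zero_or_pos q with rfl | hq
  · exact ⟨0, Nat.zero_le _⟩
  obtain ⟨n, hn⟩ := lt_iSup_iff.1 ((Nat.cast_lt.2 (Nat.sub_lt hq one_pos)).trans_le h)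
  exact ⟨n, by have := Nat.cast_lt.1 hn; omega⟩

theorem exists_chain_ge {q : Fin k → ℕ} (hq : ∀ i, (q i : ℕ∞) ≤ Λ.chainDeg start sched i) :
    ∃ n, q ≤ Λ.d (Λ.chain start sched n) := by
  choose g hg using fun i => exists_le_of_natCast_le_iSup (hq i)
  exact ⟨Finset.univ.sup g, fun i =>
    (hg i).trans ((isPrefix_chain (Finset.le_sup (Finset.mem_univ i))).d_le i)⟩

theorem isPathFun_chainFun : Λ.IsPathFun (Λ.chainDeg start sched) (Λ.chainFun start sched) := by
  have hcast : ∀ {q n}, q ≤ Λ.d (Λ.chain start sched n) →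
      ∀ i, (q i : ℕ∞) ≤ Λ.d (Λ.chain start sched n) i := fun h i => Nat.cast_le.2 (h i)
  refine ⟨fun p q hpq hq => ?_, fun p q hpq hq => ?_, fun p q u hpq hqu hu => ?_⟩
  · obtain ⟨n, hn⟩ := exists_chain_ge hq
    rw [chainFun_eq hn]
    exact (isPathFun_seg _).1 p q hpq (hcast hn)
  · obtain ⟨n, hn⟩ := exists_chain_ge hq
    rw [chainFun_eq hn, chainFun_eq (hpq.trans hn), chainFun_eq hn]
    exact (isPathFun_seg _).2.1 p q hpq (hcast hn)
  · obtain ⟨n, hn⟩ := exists_chain_ge hu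
    rw [chainFun_eq (hqu.trans hn), chainFun_eq hn, chainFun_eq hn]
    exact (isPathFun_seg _).2.2 p q u hpq hqu (hcast hn)

/-- A schedule visiting every request `(P, F)` at arbitrarily late stages makes the limit a
boundary path: the request is served at a stage where the chain already reaches `P`. -/
theorem boundaryAt_chainFun (hsched : ∀ e N, ∃ n, N ≤ n ∧ sched n = e) {P : Fin k → ℕ}
    (hP : ∀ i, (P i : ℕ∞) ≤ Λ.chainDeg start sched i) :
    Λ.BoundaryAt (Λ.chainDeg start sched) (Λ.chainFun start sched) P := by
  intro E hEfin _ hEex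
  obtain ⟨F, rfl⟩ := hEfin.exists_finset_coe
  obtain ⟨n₀, hn₀⟩ := exists_chain_ge hP
  obtain ⟨n, hn, hsn⟩ := hsched (P, F) n₀
  set ρ := Λ.chain start sched n
  have hPρ : P ≤ Λ.d ρ := hn₀.trans (isPrefix_chain hn).d_le
  have hr : Λ.r (Λ.suf ρ P) = Λ.chainFun start sched P P := by
    rw [chainFun_eq hPρ, seg_self hPρ, s_pre hPρ]
  obtain ⟨τ, hτ, -⟩ := Exhaustive.ext (hr ▸ hEex) _ (r_s _)
  obtain ⟨τ, ⟨hτr, μ, hμF, hmce⟩, hstep⟩ := exists_step_eq ⟨hPρ, τ, hτ⟩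
  have hρτ : Λ.s ρ = Λ.r τ := (s_suf hPρ).symm.trans hτr.symm
  have hchain : Λ.chain start sched (n + 1) = Λ.comp ρ τ := by
    rw [chain, hsn]; exact hstep
  have hsuf : Λ.seg (Λ.comp ρ τ) P (Λ.d (Λ.comp ρ τ)) = Λ.comp (Λ.suf ρ P) τ := by
    rw [seg_d, suf_comp_of_le hρτ hPρ]
  obtain ⟨hle, hseg⟩ := (isPathFun_seg _).eq_of_isPrefix
    (hPρ.trans (isPrefix_comp hρτ).d_le) (fun _ => le_rfl) (hsuf ▸ (mem_MCE_iff.1 hmce).2.2)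
  rw [← hchain] at hle hseg
  exact ⟨μ, hμF, coe_le_of_le hle (le_chainDeg (n + 1)), (chainFun_eq hle).trans hseg⟩

theorem exists_boundaryFun_prefix_eq (start : Λ.Path) :
    ∃ (M : Fin k → ℕ∞) (z : (Fin k → ℕ) → (Fin k → ℕ) → Λ.Path),
      Λ.IsBoundaryFun M z ∧ (∀ i, (Λ.d start i : ℕ∞) ≤ M i) ∧ z 0 (Λ.d start) = start := by
  have := Λ.countable
  obtain ⟨f, hf⟩ := exists_surjective_nat ((Fin k → ℕ) × Finset Λ.Path)
  have hsched : ∀ e N, ∃ n : ℕ, N ≤ n ∧ f n.unpair.1 = e := fun e N =>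
    let ⟨m, hm⟩ := hf e
    ⟨Nat.pair m N, Nat.right_le_pair m N, by rw [Nat.unpair_pair, hm]⟩
  refine ⟨Λ.chainDeg start _, Λ.chainFun start _,
    ⟨isPathFun_chainFun, fun P hP => boundaryAt_chainFun hsched hP⟩, le_chainDeg 0,
    (chainFun_eq (n := 0) le_rfl).trans (seg_zero_d start)⟩

end Existence

end KGraph

/-- Lemma 3.2. For distinct `μ, ν` with common range and source in a
finitely aligned `k`-graph, the following are equivalent: (1) `(μ, ν)` is a generalised
cycle; (2) `Ext(μ; {ν})` is exhaustive in `s(μ)Λ`; (3) every boundary path extending `μ`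
extends `ν`, i.e. `{μx : x ∈ s(μ)∂Λ} ⊆ {νy : y ∈ s(ν)∂Λ}` (the path `μx` being
characterised by `d(μx) = d(μ) + d(x)`, `(μx)(0, d μ) = μ` and `σ^{d μ}(μx) = x`). -/
theorem stmt8 {k : ℕ} (Λ : KGraph k) (hFA : Λ.FinitelyAligned)
    (mu nu : Λ.Path) (hne : mu ≠ nu) (hs : Λ.s mu = Λ.s nu) (hr : Λ.r mu = Λ.r nu) :
    (Λ.IsGenCycle mu nu ↔ Λ.Exhaustive (Λ.s mu) (Λ.Ext mu {nu})) ∧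
    (Λ.IsGenCycle mu nu ↔
      ∀ (m : Fin k → ℕ∞) (x : (Fin k → ℕ) → (Fin k → ℕ) → Λ.Path),
        Λ.IsBoundaryFun m x → x 0 0 = Λ.s mu →
        ∀ z : (Fin k → ℕ) → (Fin k → ℕ) → Λ.Path,
          Λ.IsPathFun (fun i => (Λ.d mu i : ℕ∞) + m i) z →
          z 0 (Λ.d mu) = mu →
          (∀ p q : Fin k → ℕ, p ≤ q → (∀ i, (q i : ℕ∞) ≤ m i) →
            z (Λ.d mu + p) (Λ.d mu + q) = x p q) →
          ∃ (m' : Fin k → ℕ∞) (y : (Fin k → ℕ) → (Fin k → ℕ) → Λ.Path),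
            Λ.IsBoundaryFun m' y ∧ y 0 0 = Λ.s nu ∧
            (∀ i, (Λ.d nu i : ℕ∞) + m' i = (Λ.d mu i : ℕ∞) + m i) ∧
            z 0 (Λ.d nu) = nu ∧
            ∀ p q : Fin k → ℕ, p ≤ q → (∀ i, (q i : ℕ∞) ≤ m' i) →
              z (Λ.d nu + p) (Λ.d nu + q) = y p q) := by
  open KGraph in
  refine ⟨⟨IsGenCycle.exhaustive_ext, isGenCycle_of_exhaustive_ext hne hs hr⟩,
    fun hgc m x hx _ z hz hzμ hzx => ?_, fun h3 => ⟨hne, hs, hr, fun τ hτ => ?_⟩⟩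
  · have hzb := hx.prepend hFA hz hzx
    obtain ⟨hνM, hzν⟩ := hzb.prefix_eq_of_isGenCycle hFA hgc (fun _ => le_self_add) hzμ
    refine ⟨_, _, hzb.shift hνM, ?_, fun i => add_tsub_cancel_of_le (hνM i), hzν,
      fun _ _ _ _ => rfl⟩
    rw [add_zero, ← hz.s_eq zero_le hνM, hzν]
  · obtain ⟨M, z, hz, hM, hzμτ⟩ := exists_boundaryFun_prefix_eq (Λ.comp mu τ)
    obtain ⟨hle, hzμ⟩ := hz.1.eq_of_isPrefix zero_le hM (hzμτ ▸ isPrefix_comp hτ.symm)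
    rw [zero_add] at hle hzμ
    have hμM := coe_le_of_le hle hM
    have hMμ : (fun i => (Λ.d mu i : ℕ∞) + (M i - Λ.d mu i)) = M :=
      funext fun i => add_tsub_cancel_of_le (hμM i)
    have hx0 : z (Λ.d mu + 0) (Λ.d mu + 0) = Λ.s mu := by
      rw [add_zero, ← hz.1.s_eq zero_le hμM, hzμ]
    obtain ⟨m', -, -, -, hm', hzν, -⟩ := h3 _ _ (hz.shift hμM) hx0 z
      (by rw [hMμ]; exact hz.1) hzμ fun _ _ _ _ => rfl
    exact hz.1.MCE_nonempty hzμτ hzν hM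
      fun i => le_self_add.trans ((hm' i).trans (congrFun hMμ i)).le
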